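/- For a group Γ, the following are equivalent for the left-right action of Γ × Γ on Γ: (a) for every element (g,h) ≠ (e,e) of Γ × Γ, the fixed-point set Fix(g,h) = {x ∈ Γ : g x h⁻¹ = x} has infinite index in Γ (i.e., Γ is not a finite union of Γ×Γ-translates of Fix(g,h)); (b) Γ is ICC, i.e., every nontrivial conjugacy class of Γ is infinite. -/

import Mathlib

open Pointwise

/-- The left-right action of `Γ × Γ` on `Γ`: `(g, h) • x = g * x * h⁻¹`. -/
instance leftRightAction (Γ : Type*) [Group Γ] : MulAction (Γ × Γ) Γ where
  smul := fun p x => p.1 * x * p.2⁻¹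
  one_smul := fun x => by
    show (1 : Γ) * x * (1 : Γ)⁻¹ = x
    simp
  mul_smul := fun p q x => by
    show (p.1 * q.1) * x * (p.2 * q.2)⁻¹ = p.1 * (q.1 * x * q.2⁻¹) * p.2⁻¹
    group

/-! A fixed set `Fix(g, h)` is empty unless `g` and `h` are conjugate, and then it is a left coset
of the centralizer `C(h)`; moreover a translate of `Fix(g, h)` is the fixed set of a conjugate pair.
Hence a finite cover of `Γ` by translates of `Fix(g, h)` is a finite cover by left cosets of
centralizers of conjugates of `h`, and by B. H. Neumann's lemma one of them has finite index, i.e.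
some conjugate of `h` has a finite conjugacy class. Conversely, if `h ≠ 1` has a finite conjugacy
class, the finitely many left cosets `r C(h) = (r, 1) • Fix(h, h)` cover `Γ`. -/

open MulAction Subgroup

section

variable {G : Type*} [Group G]

lemma setOf_exists_conj_eq_conjugatesOf (h : G) :
    {x : G | ∃ g : G, g * h * g⁻¹ = x} = conjugatesOf h := by
  ext x
  exact isConj_iff.symm

lemma Subgroup.index_centralizer_singleton (h : G) :
    (centralizer {h}).index = (conjugatesOf h).ncard := by
  have horbit : orbit (ConjAct G) h = conjugatesOf h := by
    ext x
    exact ConjAct.mem_orbit_conjAct.trans isConj_comm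
  calc (centralizer {h}).index
      = (comap ConjAct.toConjAct.toMonoidHom (stabilizer (ConjAct G) h)).index :=
        congrArg index (centralizer_eq_comap_stabilizer h)
    _ = (stabilizer (ConjAct G) h).index := index_comap_of_surjective _ ConjAct.toConjAct.surjective
    _ = (conjugatesOf h).ncard := by rw [index_stabilizer, horbit]

lemma Subgroup.finiteIndex_centralizer_singleton_iff (h : G) :
    (centralizer {h}).FiniteIndex ↔ (conjugatesOf h).Finite := by
  rw [finiteIndex_iff, index_centralizer_singleton]
  exact ⟨Set.finite_of_ncard_ne_zero, fun hfin => ((Set.ncard_pos hfin).mpr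
    ⟨h, mem_conjugatesOf_self⟩).ne'⟩

lemma Subgroup.exists_fin_leftCoset_cover (H : Subgroup G) [H.FiniteIndex] :
    ∃ (n : ℕ) (r : Fin n → G), ⋃ k, r k • (H : Set G) = Set.univ := by
  obtain ⟨n, ⟨e⟩⟩ := Finite.exists_equiv_fin (G ⧸ H)
  refine ⟨n, fun k => (e.symm k).out, Set.eq_univ_of_forall fun x => Set.mem_iUnion.mpr ⟨e x, ?_⟩⟩
  rw [mem_leftCoset_iff, SetLike.mem_coe, ← QuotientGroup.eq]
  simp

end

section LeftRight

variable {Γ : Type*} [Group Γ]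

lemma leftRight_smul_def (p : Γ × Γ) (x : Γ) : p • x = p.1 * x * p.2⁻¹ := rfl

lemma mem_fixedBy_leftRight_iff {p : Γ × Γ} {x : Γ} : x ∈ fixedBy Γ p ↔ p.1 * x = x * p.2 := by
  rw [mem_fixedBy, leftRight_smul_def, mul_inv_eq_iff_eq_mul]

lemma fixedBy_leftRight_diag (h : Γ) : fixedBy Γ (h, h) = centralizer {h} := by
  ext x
  rw [mem_fixedBy_leftRight_iff, SetLike.mem_coe, mem_centralizer_singleton_iff, eq_comm]

lemma fixedBy_leftRight_eq_smul_centralizer {p : Γ × Γ} {x₀ : Γ} (hx₀ : x₀ ∈ fixedBy Γ p) :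
    fixedBy Γ p = x₀ • (centralizer {p.2} : Set Γ) := by
  have hp₁ : p.1 = x₀ * p.2 * x₀⁻¹ := eq_mul_inv_of_mul_eq (mem_fixedBy_leftRight_iff.mp hx₀)
  ext x
  rw [mem_leftCoset_iff, SetLike.mem_coe, mem_centralizer_singleton_iff, mem_fixedBy_leftRight_iff,
    hp₁, mul_assoc x₀, mul_assoc x₀, ← eq_inv_mul_iff_mul_eq, eq_comm]
  simp only [mul_assoc]

lemma leftRight_fst_one_smul_set (r : Γ) (s : Set Γ) : ((r, 1) : Γ × Γ) • s = r • s := by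
  ext x
  simp [Set.mem_smul_set, leftRight_smul_def]

lemma iUnion_smul_fixedBy_leftRight_ne_univ {ι : Type*} [Fintype ι]
    (hicc : ∀ h : Γ, h ≠ 1 → (conjugatesOf h).Infinite) {p : Γ × Γ} (hp : p ≠ 1)
    (t : ι → Γ × Γ) : ⋃ i, t i • fixedBy Γ p ≠ Set.univ := by
  intro hcov
  obtain ⟨x₀, hx₀⟩ : (fixedBy Γ p).Nonempty := by
    obtain ⟨i, hi⟩ := Set.mem_iUnion.mp (hcov ▸ Set.mem_univ 1)
    exact Set.smul_set_nonempty.mp ⟨1, hi⟩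
  have hp₂ : p.2 ≠ 1 := by
    intro hp₂
    have hp₁ : p.1 = 1 := by simpa [hp₂] using mem_fixedBy_leftRight_iff.mp hx₀
    exact hp (Prod.ext hp₁ hp₂)
  have hcoset : ∀ i, t i • fixedBy Γ p =
      (t i • x₀) • (centralizer {(t i).2 * p.2 * (t i).2⁻¹} : Set Γ) := by
    intro i
    have hmem : t i • x₀ ∈ fixedBy Γ (t i * p * (t i)⁻¹) :=
      smul_fixedBy Γ p (t i) ▸ Set.smul_mem_smul_set hx₀
    rw [smul_fixedBy, fixedBy_leftRight_eq_smul_centralizer hmem]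
    rfl
  obtain ⟨k, -, hk⟩ := exists_finiteIndex_of_leftCoset_cover (s := Finset.univ)
    (by simpa [hcoset] using hcov)
  rw [finiteIndex_centralizer_singleton_iff] at hk
  exact hicc _ (by simpa using hp₂) hk

lemma exists_fin_iUnion_smul_fixedBy_leftRight_eq_univ {h : Γ} (hfin : (conjugatesOf h).Finite) :
    ∃ (n : ℕ) (t : Fin n → Γ × Γ), ⋃ k, t k • fixedBy Γ (h, h) = Set.univ := by
  have := (finiteIndex_centralizer_singleton_iff h).mpr hfin
  obtain ⟨n, r, hr⟩ := (centralizer {h}).exists_fin_leftCoset_cover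
  exact ⟨n, fun k => (r k, 1), by simpa only [leftRight_fst_one_smul_set, fixedBy_leftRight_diag]⟩

end LeftRight

/-- For the left-right action of `Γ × Γ` on `Γ`, the fixed-point set of every nontrivial
element has infinite index (`Γ` is not covered by finitely many translates) if and only if
`Γ` is ICC (every nontrivial conjugacy class is infinite). -/
theorem fix_infinite_index_iff_ICC (Γ : Type*) [Group Γ] :
    (∀ p : Γ × Γ, p ≠ 1 →
      ∀ (n : ℕ) (t : Fin n → Γ × Γ),
        (⋃ k : Fin n, t k • {x : Γ | p.1 * x * p.2⁻¹ = x}) ≠ Set.univ) ↔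
    (∀ h : Γ, h ≠ 1 → {x : Γ | ∃ g : Γ, g * h * g⁻¹ = x}.Infinite) := by
  simp_rw [setOf_exists_conj_eq_conjugatesOf]
  constructor
  · intro hfix h hh hfin
    obtain ⟨n, t, hcov⟩ := exists_fin_iUnion_smul_fixedBy_leftRight_eq_univ hfin
    exact hfix (h, h) (by simpa [Prod.ext_iff] using hh) n t hcov
  · intro hicc p hp n t
    exact iUnion_smul_fixedBy_leftRight_ne_univ hicc hp t
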